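/- arXiv:0808.1365 — 2 statements merged into one kernel-verified Lean document; each statement's English description precedes it below -/
import Mathlib

section
/- Let 𝔹 be the open unit ball in ℂ^N with coordinates x, φ(x) = 1 − ⟨x,x⟩, λ = Im(⟨x, dx⟩) the standard 1-form, and μ = d(λ/φ) the symplectic form on 𝔹. For any constant c ∈ ℝ, the diffeomorphism F : 𝔹 → 𝔹 defined by F(x) = e^{i c φ(x)} x is a symplectomorphism: F*μ = μ. -/
open Complex

/-- The exterior derivative of a 1-form `ω` on a normed space, as a 2-form:
`dω(x)(v,w) = (D_v ω)(w) − (D_w ω)(v)`. -/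
noncomputable def extDerivOneForm {E : Type*} [NormedAddCommGroup E] [NormedSpace ℝ E]
    (ω : E → (E →L[ℝ] ℝ)) (x : E) (v w : E) : ℝ :=
  fderiv ℝ ω x v w - fderiv ℝ ω x w v

variable {N : ℕ}

noncomputable def lamAux (N : ℕ) (x : EuclideanSpace ℂ (Fin N)) :
    EuclideanSpace ℂ (Fin N) →L[ℝ] ℝ :=
  Complex.imCLM.comp (((innerSL ℂ) x).restrictScalars ℝ)

lemma lamAux_apply (x v : EuclideanSpace ℂ (Fin N)) :
    lamAux N x v = (inner ℂ x v : ℂ).im := rfl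

lemma lam_isBdd (N : ℕ) : IsBoundedLinearMap ℝ (lamAux N) := by
  refine ⟨⟨fun x y => ?_, fun r x => ?_⟩, 1, one_pos, fun x => ?_⟩
  · ext v; simp [lamAux_apply, inner_add_left]
  · ext v
    rw [ContinuousLinearMap.smul_apply, lamAux_apply, lamAux_apply, ← Complex.coe_smul,
      inner_smul_left]
    simp
  · rw [one_mul]
    refine ContinuousLinearMap.opNorm_le_bound _ (norm_nonneg x) fun v => ?_
    rw [lamAux_apply]
    calc |(inner ℂ x v : ℂ).im| ≤ ‖(inner ℂ x v : ℂ)‖ := Complex.abs_im_le_norm _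
    _ ≤ ‖x‖ * ‖v‖ := norm_inner_le_norm x v

lemma real_inner_eq (x v : EuclideanSpace ℂ (Fin N)) :
    (inner ℝ x v : ℝ) = (inner ℂ x v : ℂ).re := by
  simp [PiLp.inner_apply, Complex.inner]

lemma hasFDerivAt_phi (x : EuclideanSpace ℂ (Fin N)) :
    HasFDerivAt (fun x : EuclideanSpace ℂ (Fin N) => 1 - ‖x‖ ^ 2)
      ((-2 : ℝ) • (innerSL ℝ x)) x := by
  have h2 := ((hasFDerivAt_id (𝕜 := ℝ) x).norm_sq).const_sub 1
  refine h2.congr_fderiv ?_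
  ext v
  simp [two_smul]

lemma mu_formula (y : EuclideanSpace ℂ (Fin N)) (hy : ‖y‖ < 1)
    (v w : EuclideanSpace ℂ (Fin N)) :
    extDerivOneForm (fun x => (1 - ‖x‖ ^ 2)⁻¹ •
        Complex.imCLM.comp (((innerSL ℂ) x).restrictScalars ℝ)) y v w
      = 2 * (1 - ‖y‖ ^ 2)⁻¹ * (inner ℂ v w : ℂ).im
        + 2 * ((1 - ‖y‖ ^ 2)⁻¹) ^ 2 * ((inner ℂ y v : ℂ).re * (inner ℂ y w : ℂ).im
            - (inner ℂ y w : ℂ).re * (inner ℂ y v : ℂ).im) := by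
  have hφ : (1 : ℝ) - ‖y‖ ^ 2 ≠ 0 := by
    have : ‖y‖ ^ 2 < 1 := by nlinarith [norm_nonneg y]
    linarith
  have hinv : HasFDerivAt (fun x : EuclideanSpace ℂ (Fin N) => (1 - ‖x‖ ^ 2)⁻¹)
      ((-((1 - ‖y‖ ^ 2) ^ 2)⁻¹) • ((-2 : ℝ) • (innerSL ℝ y))) y :=
    (hasDerivAt_inv hφ).comp_hasFDerivAt y (hasFDerivAt_phi y)
  have hlam : HasFDerivAt (lamAux N) (lam_isBdd N).toContinuousLinearMap y :=
    (lam_isBdd N).hasFDerivAt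
  have hG := hinv.smul hlam
  have hfun : (fun x : EuclideanSpace ℂ (Fin N) => (1 - ‖x‖ ^ 2)⁻¹ •
      Complex.imCLM.comp (((innerSL ℂ) x).restrictScalars ℝ))
      = fun x => (1 - ‖x‖ ^ 2)⁻¹ • lamAux N x := rfl
  rw [extDerivOneForm, hfun,
    HasFDerivAt.fderiv (f := fun x : EuclideanSpace ℂ (Fin N) => (1 - ‖x‖ ^ 2)⁻¹ • lamAux N x) hG]
  have happ : ∀ a b : EuclideanSpace ℂ (Fin N),
      ((1 - ‖y‖ ^ 2)⁻¹ • (lam_isBdd N).toContinuousLinearMap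
        + ((-((1 - ‖y‖ ^ 2) ^ 2)⁻¹) • ((-2 : ℝ) • (innerSL ℝ y))).smulRight (lamAux N y)) a b
      = (1 - ‖y‖ ^ 2)⁻¹ * (inner ℂ a b : ℂ).im
        + ((((1 - ‖y‖ ^ 2)⁻¹) ^ 2) * (2 * (inner ℂ y a : ℂ).re)) * (inner ℂ y b : ℂ).im := by
    intro a b
    have h1 : ((lam_isBdd N).toContinuousLinearMap :
        EuclideanSpace ℂ (Fin N) →L[ℝ] (EuclideanSpace ℂ (Fin N) →L[ℝ] ℝ)) a = lamAux N a := rfl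
    simp only [ContinuousLinearMap.add_apply, ContinuousLinearMap.smul_apply,
      ContinuousLinearMap.smulRight_apply, h1, lamAux_apply, ContinuousLinearMap.coe_smul',
      Pi.smul_apply, smul_eq_mul, real_inner_eq, innerSL_apply_apply, inv_pow]
    ring
  rw [happ, happ]
  have him : (inner ℂ w v : ℂ).im = -(inner ℂ v w : ℂ).im := by
    rw [← inner_conj_symm w v]; exact Complex.conj_im _
  rw [him]
  ring

lemma inner_key (x z1 z2 : EuclideanSpace ℂ (Fin N)) (u : ℂ)
    (hu : (starRingEnd ℂ) u * u = 1) (t1 t2 : ℝ) :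
    (inner ℂ (u • z1 + (u * (Complex.I * t1)) • x) (u • z2 + (u * (Complex.I * t2)) • x) : ℂ)
      = inner ℂ z1 z2 + Complex.I * t2 * inner ℂ z1 x - Complex.I * t1 * inner ℂ x z2
        + t1 * t2 * inner ℂ x x := by
  simp only [inner_add_left, inner_add_right, inner_smul_left, inner_smul_right, map_mul,
    Complex.conj_I, Complex.conj_ofReal]
  linear_combination ((inner ℂ z1 z2 : ℂ) + Complex.I * t2 * inner ℂ z1 x
    - Complex.I * t1 * inner ℂ x z2 + t1 * t2 * inner ℂ x x) * hu
    + (-(u * (starRingEnd ℂ) u * (t1 : ℂ) * (t2 : ℂ) * inner ℂ x x)) * Complex.I_sq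

lemma inner_key1 (x z : EuclideanSpace ℂ (Fin N)) (u : ℂ)
    (hu : (starRingEnd ℂ) u * u = 1) (t : ℝ) :
    (inner ℂ (u • x) (u • z + (u * (Complex.I * t)) • x) : ℂ)
      = inner ℂ x z + Complex.I * t * inner ℂ x x := by
  simp only [inner_add_right, inner_smul_left, inner_smul_right, map_mul]
  linear_combination ((inner ℂ x z : ℂ) + Complex.I * t * inner ℂ x x) * hu

/-- on the open unit ball `𝔹 ⊂ ℂ^N`, with `φ(x) = 1 − ‖x‖²`,
`λ = Im⟨x, dx⟩`, and `μ = d(λ/φ)`, the diffeomorphism `F(x) = e^{icφ(x)} x`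
is a symplectomorphism: `F*μ = μ`. -/
theorem statement_4 (N : ℕ) (c : ℝ) :
    let φ : EuclideanSpace ℂ (Fin N) → ℝ := fun x => 1 - ‖x‖ ^ 2
    let F : EuclideanSpace ℂ (Fin N) → EuclideanSpace ℂ (Fin N) :=
      fun x => Complex.exp (Complex.I * (c * φ x)) • x
    let lam : EuclideanSpace ℂ (Fin N) → (EuclideanSpace ℂ (Fin N) →L[ℝ] ℝ) :=
      fun x => Complex.imCLM.comp (((innerSL ℂ) x).restrictScalars ℝ)
    let μ := extDerivOneForm (fun x => (φ x)⁻¹ • lam x)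
    ∀ x : EuclideanSpace ℂ (Fin N), ‖x‖ < 1 →
      ∀ v w : EuclideanSpace ℂ (Fin N),
        μ (F x) (fderiv ℝ F x v) (fderiv ℝ F x w) = μ x v w := by
  intro φ F lam μ x hx v w
  have hs1 : ‖x‖ ^ 2 < 1 := by nlinarith [norm_nonneg x]
  set u : ℂ := Complex.exp (Complex.I * ((c : ℂ) * ((1 - ‖x‖ ^ 2 : ℝ) : ℂ))) with hu_def
  have habs : ‖u‖ = 1 := by
    have hre : (Complex.I * ((c : ℂ) * ((1 - ‖x‖ ^ 2 : ℝ) : ℂ))).re = 0 := by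
      simp only [Complex.mul_re, Complex.mul_im, Complex.I_re, Complex.I_im,
        Complex.ofReal_re, Complex.ofReal_im]
      ring
    rw [hu_def, Complex.norm_exp, hre, Real.exp_zero]
  have hcu : (starRingEnd ℂ) u * u = 1 := by
    rw [mul_comm, Complex.mul_conj, Complex.normSq_eq_norm_sq, habs]
    norm_num
  have h1 : HasFDerivAt (fun y : EuclideanSpace ℂ (Fin N) => ((1 - ‖y‖ ^ 2 : ℝ) : ℂ))
      (Complex.ofRealCLM.comp ((-2 : ℝ) • (innerSL ℝ x))) x :=
    Complex.ofRealCLM.hasFDerivAt.comp x (hasFDerivAt_phi x)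
  have h2 := h1.const_mul (Complex.I * (c : ℂ))
  simp only [mul_assoc] at h2
  have h3 := h2.cexp
  have hF := h3.smul (hasFDerivAt_id (𝕜 := ℝ) x)
  simp only [id_eq] at hF
  have hDFv : ∀ z : EuclideanSpace ℂ (Fin N), fderiv ℝ F x z
      = u • z + (u * (Complex.I * ((c * (-2 * (inner ℝ x z : ℝ)) : ℝ) : ℂ))) • x := by
    intro z
    show fderiv ℝ (fun y => Complex.exp (Complex.I * ((c : ℂ) * ((1 - ‖y‖ ^ 2 : ℝ) : ℂ))) • y) x z
      = _
    rw [HasFDerivAt.fderiv (f := fun y : EuclideanSpace ℂ (Fin N) =>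
      Complex.exp (Complex.I * ((c : ℂ) * ((1 - ‖y‖ ^ 2 : ℝ) : ℂ))) • y) hF]
    simp only [ContinuousLinearMap.add_apply, ContinuousLinearMap.smul_apply,
      ContinuousLinearMap.coe_smul', Pi.smul_apply, ContinuousLinearMap.smulRight_apply,
      ContinuousLinearMap.coe_comp', Function.comp_apply, ContinuousLinearMap.id_apply,
      Complex.ofRealCLM_apply, innerSL_apply_apply, smul_eq_mul]
    rw [← hu_def]
    congr 1
    congr 1
    push_cast
    ring
  have hnorm : ‖u • x‖ = ‖x‖ := by
    rw [norm_smul, habs, one_mul]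
  have hFx : F x = u • x := rfl
  have hball : ‖u • x‖ < 1 := by rw [hnorm]; exact hx
  show extDerivOneForm (fun x => (1 - ‖x‖ ^ 2)⁻¹ •
      Complex.imCLM.comp (((innerSL ℂ) x).restrictScalars ℝ)) (F x)
      (fderiv ℝ F x v) (fderiv ℝ F x w)
    = extDerivOneForm (fun x => (1 - ‖x‖ ^ 2)⁻¹ •
      Complex.imCLM.comp (((innerSL ℂ) x).restrictScalars ℝ)) x v w
  rw [hFx, hDFv v, hDFv w, mu_formula _ hball, mu_formula _ hx, hnorm]
  rw [inner_key1 x v u hcu, inner_key1 x w u hcu, inner_key x v w u hcu]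
  have hxx : (inner ℂ x x : ℂ) = ((‖x‖ ^ 2 : ℝ) : ℂ) := by
    rw [inner_self_eq_norm_sq_to_K]; norm_cast
  rw [← inner_conj_symm v x, hxx]
  simp only [real_inner_eq, Complex.add_re, Complex.add_im, Complex.sub_re, Complex.sub_im,
    Complex.mul_re, Complex.mul_im, Complex.I_re, Complex.I_im, Complex.ofReal_re,
    Complex.ofReal_im, Complex.conj_re, Complex.conj_im, ← Complex.ofReal_pow]
  ring
end

section
/- Let φ be a smooth defining function of a bounded domain Ω ⊂ ℂ^n (φ > 0 inside, φ = 0 and dφ ≠ 0 on ∂Ω). Suppose log(1/φ) is strictly plurisubharmonic on Ω. Then the hypersurface X = {(t, x) ∈ ℂ × Ω : |t|² = φ(x)} is strictly pseudoconvex, i.e. the domain {|t|² < φ(x)} ⊂ ℂ^{n+1} is strictly pseudoconvex at every point of X with φ(x) > 0; equivalently, −log(φ(x) − |t|²) is strictly plurisubharmonic on {|t|² < φ}. -/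
/-! ### Auxiliary lemmas -/

section Aux

open Real

/-- Second derivative of `-log ∘ g`. -/
lemma hess_neg_log {E : Type*} [NormedAddCommGroup E] [NormedSpace ℝ E]
    (g : E → ℝ) (hg : ContDiff ℝ (⊤ : ℕ∞) g) {z : E}
    (hz' : ∀ᶠ x in nhds z, g x ≠ 0) (w : E) :
    fderiv ℝ (fderiv ℝ (fun x => -Real.log (g x))) z w w
      = ((g z) ^ 2)⁻¹ * (fderiv ℝ g z w * fderiv ℝ g z w)
        - (g z)⁻¹ * fderiv ℝ (fderiv ℝ g) z w w := by
  have hz : g z ≠ 0 := hz'.self_of_nhds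
  have hdg : ∀ x : E, HasFDerivAt g (fderiv ℝ g x) x :=
    fun x => (hg.differentiable (by simp) x).hasFDerivAt
  have hd : ∀ x : E, g x ≠ 0 → HasFDerivAt (fun x => -Real.log (g x))
      ((-(g x)⁻¹) • fderiv ℝ g x) x := by
    intro x hx
    have h2 := (Real.hasDerivAt_log hx).comp_hasFDerivAt x (hdg x)
    rw [neg_smul]; exact h2.neg
  have hev : fderiv ℝ (fun x => -Real.log (g x)) =ᶠ[nhds z]
      fun x => (-(g x)⁻¹) • fderiv ℝ g x := by
    filter_upwards [hz'] with x hx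
    exact (hd x hx).fderiv
  rw [hev.fderiv_eq]
  have hc : HasFDerivAt (fun x => -(g x)⁻¹) (((g z) ^ 2)⁻¹ • fderiv ℝ g z) z := by
    have h2 := ((hasDerivAt_inv hz).comp_hasFDerivAt z (hdg z)).neg
    refine h2.congr_fderiv ?_
    simp [neg_smul, neg_neg]
  have hF : HasFDerivAt (fun x => fderiv ℝ g x) (fderiv ℝ (fderiv ℝ g) z) z := by
    have : ContDiff ℝ (⊤ : ℕ∞) (fderiv ℝ g) := hg.fderiv_right (by simp)
    exact (this.differentiable (by simp) z).hasFDerivAt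
  have : fderiv ℝ (fun x => -(g x)⁻¹ • fderiv ℝ g x) z = _ := (hc.smul hF).fderiv
  rw [this]
  simp [ContinuousLinearMap.smulRight_apply, ContinuousLinearMap.add_apply,
    ContinuousLinearMap.smul_apply]
  ring

/-- The (constant) second derivative of `Complex.normSq`, as a bilinear map. -/
noncomputable def nqA : ℂ →L[ℝ] ℂ →L[ℝ] ℝ :=
  (2:ℝ) • (Complex.reCLM.smulRight Complex.reCLM + Complex.imCLM.smulRight Complex.imCLM)

lemma nqA_apply (t σ : ℂ) : nqA t σ = 2 * (t.re * σ.re + t.im * σ.im) := by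
  simp [nqA]; ring

lemma contDiff_nq : ContDiff ℝ (⊤ : ℕ∞) Complex.normSq := by
  have heq : (fun z : ℂ => Complex.normSq z) = fun z : ℂ =>
      Complex.reCLM z * Complex.reCLM z + Complex.imCLM z * Complex.imCLM z := by
    funext z; simp [Complex.normSq_apply]
  have h2 : ContDiff ℝ (⊤ : ℕ∞) (fun z : ℂ =>
      Complex.reCLM z * Complex.reCLM z + Complex.imCLM z * Complex.imCLM z) :=
    (Complex.reCLM.contDiff.mul Complex.reCLM.contDiff).add
      (Complex.imCLM.contDiff.mul Complex.imCLM.contDiff)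
  exact (heq ▸ h2 : ContDiff ℝ (⊤ : ℕ∞) fun z : ℂ => Complex.normSq z)

lemma hasFDerivAt_nq (t : ℂ) : HasFDerivAt Complex.normSq (nqA t) t := by
  have h1 : HasFDerivAt (fun z : ℂ => Complex.reCLM z * Complex.reCLM z +
      Complex.imCLM z * Complex.imCLM z)
      ((Complex.reCLM t • Complex.reCLM + Complex.reCLM t • Complex.reCLM) +
        (Complex.imCLM t • Complex.imCLM + Complex.imCLM t • Complex.imCLM)) t :=
    ((Complex.reCLM.hasFDerivAt.mul Complex.reCLM.hasFDerivAt).add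
      (Complex.imCLM.hasFDerivAt.mul Complex.imCLM.hasFDerivAt))
  have heq : (fun z : ℂ => Complex.normSq z) = fun z : ℂ =>
      Complex.reCLM z * Complex.reCLM z + Complex.imCLM z * Complex.imCLM z := by
    funext z; simp [Complex.normSq_apply]
  have h1' : HasFDerivAt (fun z : ℂ => Complex.normSq z) _ t := heq ▸ h1
  apply h1'.congr_fderiv
  ext σ
  simp [nqA]; ring

lemma fderiv_nq (t : ℂ) : fderiv ℝ Complex.normSq t = nqA t := (hasFDerivAt_nq t).fderiv

lemma hess_nq (t σ σ' : ℂ) : fderiv ℝ (fderiv ℝ Complex.normSq) t σ σ' = nqA σ σ' := by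
  have : fderiv ℝ Complex.normSq = fun t => nqA t := funext fderiv_nq
  rw [this, nqA.fderiv]

section Rho

variable {E : Type*} [NormedAddCommGroup E] [NormedSpace ℝ E]

lemma contDiff_rho (φ : E → ℝ) (hφ : ContDiff ℝ (⊤ : ℕ∞) φ) : ContDiff ℝ (⊤ : ℕ∞) (fun p : ℂ × E => φ p.2 - Complex.normSq p.1) :=
  (hφ.comp contDiff_snd).sub (contDiff_nq.comp contDiff_fst)

lemma fderiv_rho (φ : E → ℝ) (hφ : ContDiff ℝ (⊤ : ℕ∞) φ) (z w : ℂ × E) :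
    fderiv ℝ (fun p : ℂ × E => φ p.2 - Complex.normSq p.1) z w
      = fderiv ℝ φ z.2 w.2 - nqA z.1 w.1 := by
  have h1 : HasFDerivAt (fun p : ℂ × E => φ p.2)
      ((fderiv ℝ φ z.2).comp (ContinuousLinearMap.snd ℝ ℂ E)) z :=
    ((hφ.differentiable (by simp) z.2).hasFDerivAt).comp z hasFDerivAt_snd
  have h2 : HasFDerivAt (fun p : ℂ × E => Complex.normSq p.1)
      ((nqA z.1).comp (ContinuousLinearMap.fst ℝ ℂ E)) z :=
    (hasFDerivAt_nq z.1).comp z hasFDerivAt_fst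
  rw [HasFDerivAt.fderiv (f := fun p : ℂ × E => φ p.2 - Complex.normSq p.1) (h1.sub h2)]
  simp

lemma hess_rho (φ : E → ℝ) (hφ : ContDiff ℝ (⊤ : ℕ∞) φ) (z w : ℂ × E) :
    fderiv ℝ (fderiv ℝ (fun p : ℂ × E => φ p.2 - Complex.normSq p.1)) z w w
      = fderiv ℝ (fderiv ℝ φ) z.2 w.2 w.2 - nqA w.1 w.1 := by
  have e1 : ∀ (f : ℂ × E → ℝ) (u : ℂ × E),
      fderiv ℝ (fderiv ℝ f) z u u = iteratedFDeriv ℝ 2 f z ![u, u] := by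
    intro f u
    rw [iteratedFDeriv_two_apply]
    norm_num
  rw [e1]
  have heq : (fun p : ℂ × E => φ p.2 - Complex.normSq p.1)
      = (φ ∘ ⇑(ContinuousLinearMap.snd ℝ ℂ E))
        + (-(Complex.normSq ∘ ⇑(ContinuousLinearMap.fst ℝ ℂ E))) := by
    funext p
    simp [sub_eq_add_neg]
  rw [heq]
  have hf2 : ContDiff ℝ 2 (φ ∘ ⇑(ContinuousLinearMap.snd ℝ ℂ E)) :=
    (hφ.comp (ContinuousLinearMap.snd ℝ ℂ E).contDiff).of_le (WithTop.coe_le_coe.mpr (le_top : (2:ℕ∞) ≤ ⊤))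
  have hg2 : ContDiff ℝ 2 (-(Complex.normSq ∘ ⇑(ContinuousLinearMap.fst ℝ ℂ E))) :=
    ((contDiff_nq.comp (ContinuousLinearMap.fst ℝ ℂ E).contDiff).of_le (WithTop.coe_le_coe.mpr (le_top : (2:ℕ∞) ≤ ⊤))).neg
  rw [iteratedFDeriv_add_apply hf2.contDiffAt hg2.contDiffAt]
  rw [(ContinuousLinearMap.snd ℝ ℂ E).iteratedFDeriv_comp_right hφ z (WithTop.coe_le_coe.mpr (le_top : (2:ℕ∞) ≤ ⊤))]
  rw [iteratedFDeriv_neg_apply]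
  rw [(ContinuousLinearMap.fst ℝ ℂ E).iteratedFDeriv_comp_right contDiff_nq z (WithTop.coe_le_coe.mpr (le_top : (2:ℕ∞) ≤ ⊤))]
  simp only [ContinuousMultilinearMap.add_apply, ContinuousMultilinearMap.neg_apply,
    ContinuousMultilinearMap.compContinuousLinearMap_apply]
  have hv1 : (fun i => (ContinuousLinearMap.snd ℝ ℂ E) (![w, w] i)) = ![w.2, w.2] := by
    funext i; fin_cases i <;> rfl
  have hv2 : (fun i => (ContinuousLinearMap.fst ℝ ℂ E) (![w, w] i)) = ![w.1, w.1] := by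
    funext i; fin_cases i <;> rfl
  rw [hv1, hv2, iteratedFDeriv_two_apply, iteratedFDeriv_two_apply, hess_nq]
  norm_num
  rw [sub_eq_add_neg]

end Rho

end Aux

/-- Strict plurisubharmonicity of a function on (an open subset of) a complex
normed space: positivity of the Levi form, expressed via the real Hessian as
`L_u(z)(w) = ¼ (D²u(z)(w,w) + D²u(z)(iw,iw)) > 0` for `w ≠ 0`. -/
def StrictPSH {F : Type*} [NormedAddCommGroup F] [NormedSpace ℂ F]
    (u : F → ℝ) (U : Set F) : Prop :=
  ∀ z ∈ U, ∀ w : F, w ≠ 0 →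
    0 < iteratedFDeriv ℝ 2 u z ![w, w]
        + iteratedFDeriv ℝ 2 u z ![Complex.I • w, Complex.I • w]

set_option maxHeartbeats 2000000

/-- if `φ` is a smooth defining function of a bounded domain
`Ω ⊂ ℂ^n` (`φ > 0` inside, `φ = 0`, `dφ ≠ 0` on `∂Ω`) with `log(1/φ)` strictly
plurisubharmonic on `Ω`, then `−log(φ(x) − |t|²)` is strictly plurisubharmonic
on `{|t|² < φ(x)}`, i.e. the hypersurface `X = {|t|² = φ}` bounding it is
strictly pseudoconvex. -/
theorem statement_15
    (n : ℕ) (Ω : Set (EuclideanSpace ℂ (Fin n)))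
    (hΩopen : IsOpen Ω) (hΩbdd : Bornology.IsBounded Ω)
    (φ : EuclideanSpace ℂ (Fin n) → ℝ) (hφ : ContDiff ℝ (⊤ : ℕ∞) φ)
    (hpos : ∀ x ∈ Ω, 0 < φ x)
    (hdef : ∀ x ∈ frontier Ω, φ x = 0 ∧ fderiv ℝ φ x ≠ 0)
    (hpsh : StrictPSH (fun x => Real.log (1 / φ x)) Ω) :
    StrictPSH (fun p : ℂ × EuclideanSpace ℂ (Fin n) => -Real.log (φ p.2 - ‖p.1‖ ^ 2))
      {p : ℂ × EuclideanSpace ℂ (Fin n) | p.2 ∈ Ω ∧ ‖p.1‖ ^ 2 < φ p.2} := by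
  classical
  -- rewrite `log (1/φ)` as `-log φ`
  have hψeq : (fun x : EuclideanSpace ℂ (Fin n) => Real.log (1 / φ x)) = fun x : EuclideanSpace ℂ (Fin n) => -Real.log (φ x) := by
    funext x; rw [one_div, Real.log_inv]
  rw [hψeq] at hpsh
  -- rewrite `‖·‖^2` as `normSq`
  have hueq : (fun p : ℂ × EuclideanSpace ℂ (Fin n) => -Real.log (φ p.2 - ‖p.1‖ ^ 2))
      = fun p : ℂ × EuclideanSpace ℂ (Fin n) => -Real.log ((fun q : ℂ × EuclideanSpace ℂ (Fin n) => φ q.2 - Complex.normSq q.1) p) := by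
    funext p
    rw [Complex.sq_norm]
  intro z hz w hw
  obtain ⟨hzΩ, hzlt⟩ := hz
  rw [hueq]
  have hzlt' : Complex.normSq z.1 < φ z.2 := by
    rwa [Complex.sq_norm] at hzlt
  -- smoothness and positivity of ρ
  have hρcd : ContDiff ℝ (⊤ : ℕ∞) (fun q : ℂ × EuclideanSpace ℂ (Fin n) => φ q.2 - Complex.normSq q.1) := contDiff_rho φ hφ
  have hρpos : 0 < φ z.2 - Complex.normSq z.1 := sub_pos.2 hzlt'
  have hρev : ∀ᶠ p in nhds z, (fun q : ℂ × EuclideanSpace ℂ (Fin n) => φ q.2 - Complex.normSq q.1) p ≠ 0 :=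
    hρcd.continuous.continuousAt.eventually_ne hρpos.ne'
  -- convert goal to fderiv-of-fderiv
  have e1 : ∀ (f : ℂ × EuclideanSpace ℂ (Fin n) → ℝ) (u : ℂ × EuclideanSpace ℂ (Fin n)),
      iteratedFDeriv ℝ 2 f z ![u, u] = fderiv ℝ (fderiv ℝ f) z u u := by
    intro f u
    rw [iteratedFDeriv_two_apply]
    norm_num
  rw [e1, e1]
  rw [hess_neg_log _ hρcd hρev, hess_neg_log _ hρcd hρev]
  rw [fderiv_rho φ hφ, fderiv_rho φ hφ, hess_rho φ hφ, hess_rho φ hφ]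
  -- notations
  set t : ℂ := z.1 with ht
  set x : EuclideanSpace ℂ (Fin n) := z.2 with hx
  set τ : ℂ := w.1 with hτ
  set v : EuclideanSpace ℂ (Fin n) := w.2 with hv
  have hIw1 : (Complex.I • w).1 = Complex.I * τ := rfl
  have hIw2 : (Complex.I • w).2 = Complex.I • v := rfl
  rw [hIw1, hIw2]
  set a : ℝ := φ x with ha
  set b : ℝ := Complex.normSq t with hb
  set r : ℝ := a - b with hr
  set d1 : ℝ := fderiv ℝ φ x v with hd1
  set d2 : ℝ := fderiv ℝ φ x (Complex.I • v) with hd2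
  set h1 : ℝ := fderiv ℝ (fderiv ℝ φ) x v v with hh1
  set h2 : ℝ := fderiv ℝ (fderiv ℝ φ) x (Complex.I • v) (Complex.I • v) with hh2
  set m : ℝ := Complex.normSq τ with hm
  have hapos : 0 < a := hpos x hzΩ
  have hrpos : 0 < r := hρpos
  have hbnn : 0 ≤ b := Complex.normSq_nonneg t
  have hmnn : 0 ≤ m := Complex.normSq_nonneg τ
  set q1 : ℝ := nqA t τ with hq1
  set q2 : ℝ := nqA t (Complex.I * τ) with hq2
  have hnqττ : nqA τ τ = 2 * m := by
    rw [nqA_apply, hm, Complex.normSq_apply]; try ring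
  have hreI : (Complex.I * τ).re = -τ.im := by simp
  have himI : (Complex.I * τ).im = τ.re := by simp
  have hnqII : nqA (Complex.I * τ) (Complex.I * τ) = 2 * m := by
    rw [nqA_apply, hreI, himI, hm, Complex.normSq_apply]; try ring
  rw [hnqττ, hnqII]
  have hφev : ∀ᶠ y in nhds x, φ y ≠ 0 := by
    filter_upwards [hΩopen.mem_nhds hzΩ] with y hy
    exact (hpos y hy).ne'
  have e1' : ∀ (f : EuclideanSpace ℂ (Fin n) → ℝ) (u : EuclideanSpace ℂ (Fin n)),
      iteratedFDeriv ℝ 2 f x ![u, u] = fderiv ℝ (fderiv ℝ f) x u u := by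
    intro f u
    rw [iteratedFDeriv_two_apply]
    norm_num
  -- the key algebraic identity for q's
  have hqid : q1 ^ 2 + q2 ^ 2 = 4 * b * m := by
    rw [hq1, hq2, nqA_apply, nqA_apply, hreI, himI, hb, hm,
      Complex.normSq_apply, Complex.normSq_apply]
    ring
  -- key inequality, without denominators
  have key : 0 < (d1 - q1) * (d1 - q1) + (d2 - q2) * (d2 - q2)
      - r * (h1 - 2 * m) - r * (h2 - 2 * m) := by
    by_cases hv0 : v = 0
    · -- then τ ≠ 0, d's and h's vanish
      have hτ0 : τ ≠ 0 := by
        intro h0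
        apply hw
        have : w = (w.1, w.2) := rfl
        rw [this, ← hτ, ← hv, h0, hv0]
        rfl
      have hmpos : 0 < m := Complex.normSq_pos.2 hτ0
      have hd10 : d1 = 0 := by rw [hd1, hv0]; simp
      have hd20 : d2 = 0 := by rw [hd2, hv0]; simp
      have hh10 : h1 = 0 := by rw [hh1, hv0]; simp
      have hh20 : h2 = 0 := by rw [hh2, hv0]; simp
      rw [hd10, hd20, hh10, hh20]
      nlinarith [sq_nonneg q1, sq_nonneg q2, mul_pos hrpos hmpos]
    · -- use strict plurisubharmonicity of -log φ
      have hP := hpsh x hzΩ v hv0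
      rw [e1', e1'] at hP
      rw [hess_neg_log _ hφ hφev, hess_neg_log _ hφ hφev] at hP
      rw [← ha, ← hd1, ← hd2, ← hh1, ← hh2] at hP
      have hPdiff : 0 < d1 ^ 2 + d2 ^ 2 - a * (h1 + h2) := by
        have hid : d1 ^ 2 + d2 ^ 2 - a * (h1 + h2)
            = a ^ 2 * (((a ^ 2)⁻¹ * (d1 * d1) - a⁻¹ * h1)
              + ((a ^ 2)⁻¹ * (d2 * d2) - a⁻¹ * h2)) := by
          field_simp
          ring
        rw [hid]
        positivity
      by_cases hb0 : b = 0
      · have ht0 : t = 0 := by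
          rw [hb] at hb0
          exact Complex.normSq_eq_zero.mp hb0
        have hq10 : q1 = 0 := by rw [hq1, ht0]; simp [nqA_apply]
        have hq20 : q2 = 0 := by rw [hq2, ht0]; simp [nqA_apply]
        have hra : r = a := by rw [hr, hb0]; ring
        rw [hq10, hq20, hra]
        nlinarith [hPdiff, mul_nonneg hapos.le hmnn]
      · have hbpos : 0 < b := lt_of_le_of_ne hbnn (Ne.symm hb0)
        have h3 : q1 ^ 2 + q2 ^ 2 - 4 * b * m = 0 := by rw [hqid]; ring
        have hcert : a * b * ((d1 - q1) * (d1 - q1) + (d2 - q2) * (d2 - q2)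
              - r * (h1 - 2 * m) - r * (h2 - 2 * m))
            = b * r * (d1 ^ 2 + d2 ^ 2 - a * (h1 + h2))
              + ((a * q1 - b * d1) ^ 2 + (a * q2 - b * d2) ^ 2)
              - a * r * (q1 ^ 2 + q2 ^ 2 - 4 * b * m) := by
          rw [hr]; ring
        have habK : 0 < a * b * ((d1 - q1) * (d1 - q1) + (d2 - q2) * (d2 - q2)
            - r * (h1 - 2 * m) - r * (h2 - 2 * m)) := by
          rw [hcert, h3, mul_zero, sub_zero]
          have t1 : 0 < b * r * (d1 ^ 2 + d2 ^ 2 - a * (h1 + h2)) :=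
            mul_pos (mul_pos hbpos hrpos) hPdiff
          nlinarith [t1, sq_nonneg (a * q1 - b * d1), sq_nonneg (a * q2 - b * d2)]
        nlinarith [habK, mul_pos hapos hbpos]
  -- assemble
  have hfinal : ((a - b) ^ 2)⁻¹ * ((d1 - q1) * (d1 - q1)) - (a - b)⁻¹ * (h1 - 2 * m)
      + (((a - b) ^ 2)⁻¹ * ((d2 - q2) * (d2 - q2)) - (a - b)⁻¹ * (h2 - 2 * m))
      = (r ^ 2)⁻¹ * ((d1 - q1) * (d1 - q1) + (d2 - q2) * (d2 - q2)
        - r * (h1 - 2 * m) - r * (h2 - 2 * m)) := by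
    rw [← hr]
    field_simp
    ring
  rw [hfinal]
  exact mul_pos (by positivity) key
end
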